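/- For any partially ordered set P, d(P) = sup{d(T) | T is a linear suborder (chain) of P}, where d(P) is by definition the supremum of d(L') over all chains L' of P having a maximum and a minimum; i.e., allowing unbounded chains does not change the supremum. -/

import Mathlib

universe u v

attribute [local instance] Classical.propDecidable

noncomputable section

namespace PaperHam

/-- The `i`-th projection of a set of tuples. -/
def proj {n : ℕ} {L : Fin n → Type u} (i : Fin n) (S : Set (∀ i, L i)) : Set (L i) :=
  (fun x => x i) '' S

/-- The set of strict lower bounds of `A` within the ambient carrier `K`. -/
def lowerStrictIn {α : Type u} [LT α] (K A : Set α) : Set α := {b ∈ K | ∀ a ∈ A, b < a}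

/-- The set of strict upper bounds of `A` within the ambient carrier `K`. -/
def upperStrictIn {α : Type u} [LT α] (K A : Set α) : Set α := {b ∈ K | ∀ a ∈ A, a < b}

/-- A sub-`n`-clat: a set of tuples coinciding with the product of its projections. -/
def IsSubClat {n : ℕ} {L : Fin n → Type u} (S : Set (∀ i, L i)) : Prop :=
  S = Set.pi Set.univ fun i => proj i S

/-- `H` is an abstract `n`-hammock in the `n`-clat `∏ K i`. -/
def IsHammockIn {n : ℕ} {L : Fin n → Type u} [∀ i, LinearOrder (L i)]
    (K : ∀ i, Set (L i)) (H : Set (∀ i, L i)) : Prop :=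
  ∃ (k : ℕ) (S : Fin (k + 1) → Set (∀ i, L i)),
    (∀ j, IsSubClat (S j)) ∧
    H = ⋃ j, S j ∧
    (∀ i, proj i H = K i) ∧
    (∀ i, (proj i (S 0) ∩ proj i (S (Fin.last k))).Nonempty) ∧
    ∀ (j : Fin k) (i : Fin n),
      lowerStrictIn (K i) (proj i (S j.castSucc)) ∩ proj i (S j.succ) = ∅ ∧
      upperStrictIn (K i) (proj i (S j.castSucc)) ∩
        lowerStrictIn (K i) (proj i (S j.succ)) = ∅ ∧
      proj i (S j.castSucc) ∩ upperStrictIn (K i) (proj i (S j.succ)) = ∅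

/-- `H` is an abstract `n`-hammock in the full `n`-clat `∏ i, L i`. -/
def IsHammock {n : ℕ} {L : Fin n → Type u} [∀ i, LinearOrder (L i)]
    (H : Set (∀ i, L i)) : Prop :=
  IsHammockIn (fun _ => Set.univ) H

/-- A subset of a (pre)ordered type is scattered if it contains no copy of `ℚ`. -/
def IsScatteredSet {α : Type*} [Preorder α] (A : Set α) : Prop :=
  ¬ ∃ f : ℚ → α, StrictMono f ∧ ∀ q, f q ∈ A

/-- An order is scattered if `ℚ` does not order-embed into it. -/
def IsScatteredOrder (α : Type*) [Preorder α] : Prop :=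
  ¬ ∃ f : ℚ → α, StrictMono f

/-- A box in a hammock `H`. -/
def IsBox {n : ℕ} {L : Fin n → Type u} [∀ i, LinearOrder (L i)]
    (H X : Set (∀ i, L i)) : Prop :=
  (∀ i, (proj i X).OrdConnected) ∧ X = H ∩ Set.pi Set.univ fun i => proj i X

/-- A maximal scattered box in `H`. -/
def IsMSB {n : ℕ} {L : Fin n → Type u} [∀ i, LinearOrder (L i)]
    (H X : Set (∀ i, L i)) : Prop :=
  IsBox H X ∧ IsScatteredSet X ∧ ∀ Y, IsBox H Y → IsScatteredSet Y → X ⊆ Y → Y = X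

/-- The scattered condensation class of `x` in the hammock `H`. -/
def condClass {n : ℕ} {L : Fin n → Type u} [∀ i, LinearOrder (L i)]
    (H : Set (∀ i, L i)) (x : ∀ i, L i) : Set (∀ i, L i) :=
  {y ∈ H | IsScatteredSet (H ∩ Set.uIcc x y)}

/-- The scattered condensation class of `x` in a linear order. -/
def condClassLin {α : Type*} [LinearOrder α] (x : α) : Set α :=
  {y | IsScatteredSet (Set.uIcc x y)}

/-- The Hausdorff condensation relation `∼_o` on a linear order. -/
def hrEquiv {α : Type u} [LinearOrder α] (o : Ordinal.{v}) : α → α → Prop :=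
  Ordinal.limitRecOn (motive := fun _ => α → α → Prop) o (fun x y => x = y)
    (fun _ R x y => {s : Set α | ∃ z ∈ Set.uIcc x y, s = {w ∈ Set.uIcc x y | R z w}}.Finite)
    (fun o _ ih x y => ∃ β, ∃ hβ : β < o, ih β hβ x y)

/-- The set of `∼_o`-classes of the linear order `α`. -/
def hrClasses (α : Type u) [LinearOrder α] (o : Ordinal.{u}) : Set (Set α) :=
  {s | ∃ z : α, s = {w | hrEquiv o z w}}

/-- The Hausdorff rank of a linear order: the least ordinal `o` with `α/∼_o` finite,
`⊤ = ∞` if there is none. -/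
def HRrank (α : Type u) [LinearOrder α] : WithTop Ordinal.{u} :=
  if _ : ∃ o : Ordinal.{u}, (hrClasses α o).Finite then
    ((sInf {o : Ordinal.{u} | (hrClasses α o).Finite} : Ordinal.{u}) : WithTop Ordinal.{u})
  else ⊤

/-- The density of a linear order, valued in `{-1} ∪ Ordinal ∪ {∞}`,
encoded as `WithBot (WithTop Ordinal)` (with `⊥ = -1` and `⊤ = ∞`). -/
def density (α : Type u) [LinearOrder α] : WithBot (WithTop Ordinal.{u}) :=
  if _ : ∃ o : Ordinal.{u}, (hrClasses α o).Finite then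
    if Nonempty α then
      (((Ordinal.omega0.{u} * sInf {o : Ordinal.{u} | (hrClasses α o).Finite} +
          (((hrClasses α (sInf {o : Ordinal.{u} | (hrClasses α o).Finite})).ncard - 1 : ℕ) :
            Ordinal.{u}) : Ordinal.{u}) : WithTop Ordinal.{u}) : WithBot (WithTop Ordinal.{u}))
    else ⊥
  else ((⊤ : WithTop Ordinal.{u}) : WithBot (WithTop Ordinal.{u}))

/-- The Hausdorff rank attached to a density value: `∞` if the density is `∞`, and
otherwise the unique ordinal `a` such that the density is `ω·a + p` with `p < ω`. -/
def rankOfDensity (d : WithBot (WithTop Ordinal.{u})) : WithTop Ordinal.{u} :=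
  if h : ∃ o : Ordinal.{u}, d = ((o : WithTop Ordinal.{u}) : WithBot (WithTop Ordinal.{u})) then
    ((h.choose / Ordinal.omega0.{u} : Ordinal.{u}) : WithTop Ordinal.{u})
  else ⊤

/-- A chain in a partial order is linearly ordered. -/
def chainLinearOrder {P : Type u} [PartialOrder P] {A : Set P}
    (h : IsChain (· ≤ ·) A) : LinearOrder ↥A :=
  { (inferInstance : PartialOrder ↥A) with
    le_total := fun a b => by
      rcases eq_or_ne (a : P) (b : P) with hab | hab
      · exact Or.inl (le_of_eq (Subtype.ext hab))
      · exact (h a.2 b.2 hab).imp Subtype.coe_le_coe.mp Subtype.coe_le_coe.mp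
    toDecidableLE := Classical.decRel _ }

/-- The density of a chain in a partial order. -/
def chainDensity {P : Type u} [PartialOrder P] (A : Set P) (h : IsChain (· ≤ ·) A) :
    WithBot (WithTop Ordinal.{u}) :=
  @density ↥A (chainLinearOrder h)

/-- The density of a subset of a partial order: the supremum of the densities of its
chains having a maximum and a minimum. -/
def posetDensitySet {P : Type u} [PartialOrder P] (X : Set P) :
    WithBot (WithTop Ordinal.{u}) :=
  sSup {d | ∃ (A : Set P) (h : IsChain (· ≤ ·) A), A ⊆ X ∧
    (∃ m ∈ A, ∀ a ∈ A, a ≤ m) ∧ (∃ m ∈ A, ∀ a ∈ A, m ≤ a) ∧ d = chainDensity A h}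

/-- A linear order is discrete if every non-maximal element has an immediate successor and
every non-minimal element has an immediate predecessor. -/
def IsDiscreteOrder (α : Type*) [LinearOrder α] : Prop :=
  (∀ x : α, (∃ y, x < y) → ∃ y, x ⋖ y) ∧ ∀ x : α, (∃ y, y < x) → ∃ y, y ⋖ x

/-- `A` is an initial segment (prefix) of `B`. -/
def IsLowerWithin {α : Type*} [Preorder α] (A B : Set α) : Prop :=
  A ⊆ B ∧ ∀ a ∈ A, ∀ b ∈ B, b ≤ a → b ∈ A

/-- `A` is a final segment (suffix) of `B`. -/
def IsUpperWithin {α : Type*} [Preorder α] (A B : Set α) : Prop :=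
  A ⊆ B ∧ ∀ a ∈ A, ∀ b ∈ B, a ≤ b → b ∈ A

/-- A bottom corner of the hammock `H`: a box of `H` which is an `n`-clat such that each
projection is a prefix of the corresponding projection of `H` order-isomorphic to
`L' · ω*` (i.e. `Lex (ℕᵒᵈ × L')`) for some linear order `L'`. -/
def IsBottomCorner {n : ℕ} {L : Fin n → Type u} [∀ i, LinearOrder (L i)]
    (H F : Set (∀ i, L i)) : Prop :=
  IsBox H F ∧ IsSubClat F ∧
    ∀ i, IsLowerWithin (proj i F) (proj i H) ∧
      ∃ (β : Type u) (_ : LinearOrder β), Nonempty (↥(proj i F) ≃o Lex (ℕᵒᵈ × β))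

/-- A top corner of the hammock `H`: a box of `H` which is an `n`-clat such that each
projection is a suffix of the corresponding projection of `H` order-isomorphic to
`L' · ω` (i.e. `Lex (ℕ × L')`) for some linear order `L'`. -/
def IsTopCorner {n : ℕ} {L : Fin n → Type u} [∀ i, LinearOrder (L i)]
    (H F : Set (∀ i, L i)) : Prop :=
  IsBox H F ∧ IsSubClat F ∧
    ∀ i, IsUpperWithin (proj i F) (proj i H) ∧
      ∃ (β : Type u) (_ : LinearOrder β), Nonempty (↥(proj i F) ≃o Lex (ℕ × β))

/-- `W` is the dot sum `A ∔ B ∔ C` of the three subsets `A`, `B`, `C` of a linear order: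
the union is `W`, the maximum of `A` is the minimum of `B`, and the maximum of `B` is the
minimum of `C`. -/
def TripleDotSumEq {α : Type*} [LinearOrder α] (A B C W : Set α) : Prop :=
  W = A ∪ B ∪ C ∧ (∃ x, IsGreatest A x ∧ IsLeast B x) ∧ ∃ y, IsGreatest B y ∧ IsLeast C y

/-- A corner decomposition `(F₋, H₀, F₊)` of the hammock `H`. -/
def IsCornerDecomp {n : ℕ} {L : Fin n → Type u} [∀ i, LinearOrder (L i)]
    (H Fm H0 Fp : Set (∀ i, L i)) : Prop :=
  IsBottomCorner H Fm ∧ IsTopCorner H Fp ∧ H0 ⊆ H ∧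
    IsHammockIn (fun i => proj i H0) H0 ∧
    (∀ i, (∃ m, IsGreatest (proj i H0) m) ∧ ∃ m, IsLeast (proj i H0) m) ∧
    ∀ i, TripleDotSumEq (proj i Fm) (proj i H0) (proj i Fp) (proj i H)

/-- The carrier of the `n`-fold dot sum `L 0 ∔ L 1 ∔ ⋯ ∔ L (n-1)` inside the lexicographic
sigma type: one removes the minimum of `L i` whenever the dot sum of the preceding
components has a maximum (these two points being identified). -/
def dotSumCarrier {n : ℕ} (L : Fin n → Type u) [∀ i, LinearOrder (L i)] :
    Set (Lex (Σ i, L i)) :=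
  {x | ¬ ((∀ b : L (ofLex x).1, (ofLex x).2 ≤ b) ∧
      ∃ j < (ofLex x).1, (∃ m : L j, ∀ b : L j, b ≤ m) ∧
        ∀ k : Fin n, j < k → k < (ofLex x).1 → IsEmpty (L k))}

/-- The carrier of the binary dot sum `α ∔ β` inside `Lex (α ⊕ β)`: the minimum of `β` is
removed (being identified with the maximum of `α`) whenever both exist. -/
def dotCarrier (α β : Type u) [LinearOrder α] [LinearOrder β] : Set (Lex (α ⊕ β)) :=
  {x | ¬ ((∃ m : α, ∀ a : α, a ≤ m) ∧
      ∃ b : β, (∀ b' : β, b ≤ b') ∧ x = toLex (Sum.inr b))}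

/-- The binary dot sum `α ∔ β` of two linear orders. -/
abbrev DotSum (α β : Type u) [LinearOrder α] [LinearOrder β] : Type u := ↥(dotCarrier α β)

/-- The class `LO_fp` of finitely presented linear orders: the smallest class of linear
orders containing the empty and one-element orders, closed under order isomorphism and
under the operations `L ↦ ω·L`, `L ↦ ω*·L` and `(L₁, L₂) ↦ L₁ + L₂`. -/
inductive IsFinPresLO : ∀ (α : Type u), LinearOrder α → Prop
  | subsingleton (α : Type u) [inst : LinearOrder α] (h : Subsingleton α) :
      IsFinPresLO α inst
  | omegaMul (α : Type u) [inst : LinearOrder α] (h : IsFinPresLO α inst) :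
      IsFinPresLO (Lex (α × ℕ)) inferInstance
  | omegaStarMul (α : Type u) [inst : LinearOrder α] (h : IsFinPresLO α inst) :
      IsFinPresLO (Lex (α × ℕᵒᵈ)) inferInstance
  | sum (α β : Type u) [instα : LinearOrder α] [instβ : LinearOrder β]
      (hα : IsFinPresLO α instα) (hβ : IsFinPresLO β instβ) :
      IsFinPresLO (Lex (α ⊕ β)) inferInstance
  | iso (α β : Type u) [instα : LinearOrder α] [instβ : LinearOrder β]
      (hα : IsFinPresLO α instα) (e : α ≃o β) : IsFinPresLO β instβ




section Chunk1
variable {α : Type u} [LinearOrder α]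

lemma hrEquiv_zero_iff (x y : α) : hrEquiv (0 : Ordinal.{v}) x y ↔ x = y := by
  unfold hrEquiv; rw [Ordinal.limitRecOn_zero]

lemma hrEquiv_succ_iff (o : Ordinal.{v}) (x y : α) :
    hrEquiv (Order.succ o) x y ↔
      {s : Set α | ∃ z ∈ Set.uIcc x y, s = {w ∈ Set.uIcc x y | hrEquiv o z w}}.Finite := by
  unfold hrEquiv; rw [Ordinal.limitRecOn_succ]

lemma hrEquiv_limit_iff {o : Ordinal.{v}} (ho : Order.IsSuccLimit o) (x y : α) :
    hrEquiv o x y ↔ ∃ β, ∃ _ : β < o, hrEquiv β x y := by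
  unfold hrEquiv; rw [Ordinal.limitRecOn_limit _ _ _ _ ho]

lemma hrEquiv_bundle (o : Ordinal.{v}) :
    (∀ x : α, hrEquiv o x x) ∧
    (∀ x y : α, hrEquiv o x y → hrEquiv o y x) ∧
    (∀ x y z : α, hrEquiv o x y → hrEquiv o y z → hrEquiv o x z) ∧
    (∀ x y z : α, hrEquiv o x y → z ∈ Set.uIcc x y → hrEquiv o x z) ∧
    (∀ β ≤ o, ∀ x y : α, hrEquiv β x y → hrEquiv o x y) := by
  induction o using Ordinal.induction with
  | _ o IH =>
  rcases Ordinal.zero_or_succ_or_isSuccLimit o with rfl | ⟨γ, rfl⟩ | ho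
  · refine ⟨fun x => by rw [hrEquiv_zero_iff], fun x y h => ?_, fun x y z h h' => ?_,
      fun x y z h hz => ?_, fun β hβ x y h => ?_⟩
    · rw [hrEquiv_zero_iff] at *; exact h.symm
    · rw [hrEquiv_zero_iff] at *; exact h.trans h'
    · rw [hrEquiv_zero_iff] at *; subst h
      simpa using (by simpa [Set.uIcc_self] using hz : z = x).symm
    · obtain rfl : β = 0 := le_antisymm hβ (by exact zero_le); exact h
  · have hγ : γ < Order.succ γ := Order.lt_succ γ
    obtain ⟨rfl', hsymm, htrans, hconv, hmono⟩ := IH γ hγ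
    have key : ∀ x y z : α, hrEquiv γ x y → z ∈ Set.uIcc x y → hrEquiv γ z y := by
      intro x y z h hz
      exact htrans _ _ _ (hsymm _ _ (hconv _ _ _ h hz)) h
    refine ⟨fun x => ?_, fun x y h => ?_, fun x y z h h' => ?_, fun x y z h hz => ?_,
      fun β hβ x y h => ?_⟩
    · rw [hrEquiv_succ_iff]
      refine Set.Finite.subset (Set.finite_singleton {w ∈ Set.uIcc x x | hrEquiv γ x w}) ?_
      rintro s ⟨z, hz, rfl⟩
      simp only [Set.uIcc_self, Set.mem_singleton_iff] at hz ⊢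
      subst hz; rfl
    · rw [hrEquiv_succ_iff] at h ⊢
      rwa [Set.uIcc_comm y x]
    · rw [hrEquiv_succ_iff] at h h' ⊢
      refine Set.Finite.subset (((h.insert ∅).prod (h'.insert ∅)).image
        (fun p : Set α × Set α => (p.1 ∪ p.2) ∩ Set.uIcc x z)) ?_
      rintro s ⟨z', hz', rfl⟩
      have hz'' := Set.uIcc_subset_uIcc_union_uIcc (a := x) (b := y) (c := z)
      refine ⟨({w ∈ Set.uIcc x y | hrEquiv γ z' w}, {w ∈ Set.uIcc y z | hrEquiv γ z' w}),
        Set.mem_prod.mpr ⟨?_, ?_⟩, ?_⟩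
      · rcases Set.eq_empty_or_nonempty {w ∈ Set.uIcc x y | hrEquiv γ z' w} with he | ⟨w₀, hw₀⟩
        · rw [he]; exact Set.mem_insert _ _
        · refine Set.mem_insert_of_mem _ ⟨w₀, hw₀.1, ?_⟩
          ext w; simp only [Set.mem_setOf_eq]
          exact ⟨fun hw => ⟨hw.1, htrans _ _ _ (hsymm _ _ hw₀.2) hw.2⟩,
            fun hw => ⟨hw.1, htrans _ _ _ hw₀.2 hw.2⟩⟩
      · rcases Set.eq_empty_or_nonempty {w ∈ Set.uIcc y z | hrEquiv γ z' w} with he | ⟨w₀, hw₀⟩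
        · rw [he]; exact Set.mem_insert _ _
        · refine Set.mem_insert_of_mem _ ⟨w₀, hw₀.1, ?_⟩
          ext w; simp only [Set.mem_setOf_eq]
          exact ⟨fun hw => ⟨hw.1, htrans _ _ _ (hsymm _ _ hw₀.2) hw.2⟩,
            fun hw => ⟨hw.1, htrans _ _ _ hw₀.2 hw.2⟩⟩
      · ext w
        simp only [Set.mem_inter_iff, Set.mem_union, Set.mem_setOf_eq]
        constructor
        · rintro ⟨(⟨hw, hwR⟩ | ⟨hw, hwR⟩), hwI⟩ <;> exact ⟨hwI, hwR⟩
        · rintro ⟨hwI, hwR⟩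
          rcases hz'' hwI with hw | hw
          · exact ⟨Or.inl ⟨hw, hwR⟩, hwI⟩
          · exact ⟨Or.inr ⟨hw, hwR⟩, hwI⟩
    · rw [hrEquiv_succ_iff] at h ⊢
      have hsub : Set.uIcc x z ⊆ Set.uIcc x y :=
        Set.uIcc_subset_uIcc Set.left_mem_uIcc hz
      refine Set.Finite.subset (h.image (· ∩ Set.uIcc x z)) ?_
      rintro s ⟨z', hz', rfl⟩
      refine ⟨{w ∈ Set.uIcc x y | hrEquiv γ z' w}, ⟨z', hsub hz', rfl⟩, ?_⟩
      ext w
      simp only [Set.mem_inter_iff, Set.mem_setOf_eq]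
      have := @hsub w
      tauto
    · rcases eq_or_lt_of_le hβ with rfl | hβ'
      · exact h
      · have hβγ : β ≤ γ := Order.lt_succ_iff.mp hβ'
        have h' : hrEquiv γ x y := hmono β hβγ x y h
        rw [hrEquiv_succ_iff]
        refine Set.Finite.subset (Set.finite_singleton (Set.uIcc x y)) ?_
        rintro s ⟨z', hz', rfl⟩
        simp only [Set.mem_singleton_iff]
        ext w
        simp only [Set.mem_setOf_eq]
        refine ⟨fun hw => hw.1, fun hw => ⟨hw, ?_⟩⟩
        exact htrans _ _ _ (hsymm _ _ (hconv _ _ _ h' hz')) (hconv _ _ _ h' hw)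
  · refine ⟨fun x => ?_, fun x y h => ?_, fun x y z h h' => ?_, fun x y z h hz => ?_,
      fun β hβ x y h => ?_⟩
    · exact (hrEquiv_limit_iff ho x x).mpr ⟨0, ho.pos, (hrEquiv_zero_iff x x).mpr rfl⟩
    · rw [hrEquiv_limit_iff ho] at h ⊢
      obtain ⟨β, hβ, h⟩ := h
      exact ⟨β, hβ, (IH β hβ).2.1 _ _ h⟩
    · rw [hrEquiv_limit_iff ho] at h h' ⊢
      obtain ⟨β, hβ, h⟩ := h
      obtain ⟨δ, hδ, h'⟩ := h'
      have hm : max β δ < o := max_lt hβ hδ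
      obtain ⟨_, _, htrans, _, hmono⟩ := IH _ hm
      exact ⟨_, hm, htrans _ _ _ (hmono β (le_max_left _ _) _ _ h)
        (hmono δ (le_max_right _ _) _ _ h')⟩
    · rw [hrEquiv_limit_iff ho] at h ⊢
      obtain ⟨β, hβ, h⟩ := h
      exact ⟨β, hβ, (IH β hβ).2.2.2.1 _ _ _ h hz⟩
    · rcases eq_or_lt_of_le hβ with rfl | hβ'
      · exact h
      · exact (hrEquiv_limit_iff ho x y).mpr ⟨β, hβ', h⟩

end Chunk1
section Chunk2
variable {α : Type u} [LinearOrder α]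

lemma hrEquiv_refl (o : Ordinal.{v}) (x : α) : hrEquiv o x x := (hrEquiv_bundle o).1 x

lemma hrEquiv_symm {o : Ordinal.{v}} {x y : α} (h : hrEquiv o x y) : hrEquiv o y x :=
  (hrEquiv_bundle o).2.1 x y h

lemma hrEquiv_trans {o : Ordinal.{v}} {x y z : α} (h : hrEquiv o x y) (h' : hrEquiv o y z) :
    hrEquiv o x z := (hrEquiv_bundle o).2.2.1 x y z h h'

lemma hrEquiv_convex {o : Ordinal.{v}} {x y z : α} (h : hrEquiv o x y) (hz : z ∈ Set.uIcc x y) :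
    hrEquiv o x z := (hrEquiv_bundle o).2.2.2.1 x y z h hz

lemma hrEquiv_mono {β o : Ordinal.{v}} (hβ : β ≤ o) {x y : α} (h : hrEquiv β x y) :
    hrEquiv o x y := (hrEquiv_bundle o).2.2.2.2 β hβ x y h

/-- Absoluteness of the condensation relations along order embeddings with
order-connected range. -/
lemma hrEquiv_map {β : Type w} [LinearOrder β] (e : β ↪o α)
    (hc : (Set.range e).OrdConnected) (o : Ordinal.{v}) (x y : β) :
    hrEquiv o x y ↔ hrEquiv o (e x) (e y) := by
  induction o using Ordinal.induction generalizing x y with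
  | _ o IH =>
  have himg : ∀ x y : β, e '' Set.uIcc x y = Set.uIcc (e x) (e y) := by
    intro x y
    apply subset_antisymm
    · rintro v ⟨w, hw, rfl⟩
      rcases Set.mem_uIcc.mp hw with ⟨h1, h2⟩ | ⟨h1, h2⟩
      · exact Set.mem_uIcc.mpr (Or.inl ⟨e.monotone h1, e.monotone h2⟩)
      · exact Set.mem_uIcc.mpr (Or.inr ⟨e.monotone h1, e.monotone h2⟩)
    · intro v hv
      have hvr : v ∈ Set.range e :=
        hc.uIcc_subset (Set.mem_range_self x) (Set.mem_range_self y) hv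
      obtain ⟨u, rfl⟩ := hvr
      refine ⟨u, ?_, rfl⟩
      rcases Set.mem_uIcc.mp hv with ⟨h1, h2⟩ | ⟨h1, h2⟩
      · exact Set.mem_uIcc.mpr (Or.inl ⟨e.le_iff_le.mp h1, e.le_iff_le.mp h2⟩)
      · exact Set.mem_uIcc.mpr (Or.inr ⟨e.le_iff_le.mp h1, e.le_iff_le.mp h2⟩)
  rcases Ordinal.zero_or_succ_or_isSuccLimit o with rfl | ⟨γ, rfl⟩ | ho
  · rw [hrEquiv_zero_iff, hrEquiv_zero_iff]
    exact ⟨congrArg e, fun h => e.injective h⟩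
  · rw [hrEquiv_succ_iff, hrEquiv_succ_iff]
    have hγ : γ < Order.succ γ := Order.lt_succ γ
    have hfam : {s : Set α | ∃ z ∈ Set.uIcc (e x) (e y),
          s = {w ∈ Set.uIcc (e x) (e y) | hrEquiv γ z w}} =
        (Set.image e) '' {s : Set β | ∃ z ∈ Set.uIcc x y,
          s = {w ∈ Set.uIcc x y | hrEquiv γ z w}} := by
      apply subset_antisymm
      · rintro s ⟨z', hz', rfl⟩
        rw [← himg] at hz'
        obtain ⟨z, hz, rfl⟩ := hz'
        refine ⟨{w ∈ Set.uIcc x y | hrEquiv γ z w}, ⟨z, hz, rfl⟩, ?_⟩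
        ext v
        constructor
        · rintro ⟨w, ⟨hw1, hw2⟩, rfl⟩
          exact ⟨(himg x y) ▸ Set.mem_image_of_mem e hw1, (IH γ hγ z w).mp hw2⟩
        · rintro ⟨hv1, hv2⟩
          rw [← himg] at hv1
          obtain ⟨w, hw, rfl⟩ := hv1
          exact ⟨w, ⟨hw, (IH γ hγ z w).mpr hv2⟩, rfl⟩
      · rintro s ⟨t, ⟨z, hz, rfl⟩, rfl⟩
        refine ⟨e z, (himg x y) ▸ Set.mem_image_of_mem e hz, ?_⟩
        ext v
        constructor
        · rintro ⟨w, ⟨hw1, hw2⟩, rfl⟩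
          exact ⟨(himg x y) ▸ Set.mem_image_of_mem e hw1, (IH γ hγ z w).mp hw2⟩
        · rintro ⟨hv1, hv2⟩
          rw [← himg] at hv1
          obtain ⟨w, hw, rfl⟩ := hv1
          exact ⟨w, ⟨hw, (IH γ hγ z w).mpr hv2⟩, rfl⟩
    rw [hfam]
    constructor
    · exact fun h => h.image _
    · intro h
      exact Set.Finite.of_finite_image h
        ((Set.image_injective.mpr e.injective).injOn)
  · rw [hrEquiv_limit_iff ho, hrEquiv_limit_iff ho]
    exact exists_congr fun β => exists_congr fun hβ => IH β hβ x y

/-- The class of `z`. -/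
def cls (o : Ordinal.{v}) (z : α) : Set α := {w | hrEquiv o z w}

lemma mem_cls_self (o : Ordinal.{v}) (z : α) : z ∈ cls o z := hrEquiv_refl o z

lemma cls_eq_cls {o : Ordinal.{v}} {z z' : α} (h : hrEquiv o z z') : cls o z = cls o z' := by
  ext w
  exact ⟨fun hw => hrEquiv_trans (hrEquiv_symm h) hw, fun hw => hrEquiv_trans h hw⟩

lemma cls_eq_iff {o : Ordinal.{v}} {z z' : α} : cls o z = cls o z' ↔ hrEquiv o z z' := by
  refine ⟨fun h => ?_, cls_eq_cls⟩
  have := mem_cls_self o z'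
  rw [← h] at this
  exact this

lemma hrClasses_eq_range (o : Ordinal.{u}) :
    hrClasses α o = Set.range (cls o) := by
  ext s
  exact ⟨fun ⟨z, hz⟩ => ⟨z, hz.symm⟩, fun ⟨z, hz⟩ => ⟨z, hz.symm⟩⟩

lemma cls_mem_hrClasses (o : Ordinal.{u}) (z : α) : cls o z ∈ hrClasses α o := ⟨z, rfl⟩

/-- Coarsening: classes at a larger ordinal are images of classes at a smaller one. -/
lemma hrClasses_coarsen {o o' : Ordinal.{u}} (h : o ≤ o') :
    hrClasses α o' ⊆ (fun s => {w | ∃ z ∈ s, hrEquiv o' z w}) '' hrClasses α o := by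
  rw [hrClasses_eq_range, hrClasses_eq_range]
  rintro s ⟨z, rfl⟩
  refine ⟨cls o z, Set.mem_range_self z, ?_⟩
  ext w
  simp only [Set.mem_setOf_eq]
  constructor
  · rintro ⟨z', hz', hw⟩
    exact hrEquiv_trans (hrEquiv_mono h hz') hw
  · intro hw
    exact ⟨z, mem_cls_self o z, hw⟩

lemma hrClasses_finite_mono {o o' : Ordinal.{u}} (h : o ≤ o')
    (hf : (hrClasses α o).Finite) : (hrClasses α o').Finite :=
  (hf.image _).subset (hrClasses_coarsen h)

lemma hrClasses_ncard_anti {o o' : Ordinal.{u}} (h : o ≤ o')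
    (hf : (hrClasses α o).Finite) : (hrClasses α o').ncard ≤ (hrClasses α o).ncard :=
  le_trans (Set.ncard_le_ncard (hrClasses_coarsen h) (hf.image _)) (Set.ncard_image_le hf)

variable {β : Type u} [LinearOrder β]

/-- Classes of a convexly embedded suborder are preimages of ambient classes. -/
lemma hrClasses_embed (e : β ↪o α) (hc : (Set.range e).OrdConnected) (o : Ordinal.{u}) :
    hrClasses β o ⊆ (fun s => e ⁻¹' s) '' hrClasses α o := by
  rw [hrClasses_eq_range, hrClasses_eq_range]
  rintro s ⟨z, rfl⟩
  refine ⟨cls o (e z), Set.mem_range_self _, ?_⟩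
  ext w
  simp only [Set.mem_preimage]
  exact (hrEquiv_map e hc o z w).symm.trans Iff.rfl

lemma hrClasses_embed_finite (e : β ↪o α) (hc : (Set.range e).OrdConnected)
    {o : Ordinal.{u}} (hf : (hrClasses α o).Finite) : (hrClasses β o).Finite :=
  (hf.image _).subset (hrClasses_embed e hc o)

lemma hrClasses_embed_ncard (e : β ↪o α) (hc : (Set.range e).OrdConnected)
    {o : Ordinal.{u}} (hf : (hrClasses α o).Finite) :
    (hrClasses β o).ncard ≤ (hrClasses α o).ncard :=
  le_trans (Set.ncard_le_ncard (hrClasses_embed e hc o) (hf.image _)) (Set.ncard_image_le hf)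

/-- If every ambient class has a representative in the suborder, the ambient order has
at most as many classes. -/
lemma hrClasses_ncard_le_of_reps (e : β ↪o α) (hc : (Set.range e).OrdConnected)
    {o : Ordinal.{u}} (hrep : ∀ z : α, ∃ t : β, hrEquiv o z (e t))
    (hf : (hrClasses β o).Finite) :
    (hrClasses α o).ncard ≤ (hrClasses β o).ncard := by
  have hsub : hrClasses α o ⊆ (fun s => {w | ∃ u ∈ s, hrEquiv o (e u) w}) '' hrClasses β o := by
    rw [hrClasses_eq_range, hrClasses_eq_range]
    rintro s ⟨z, rfl⟩
    obtain ⟨t, ht⟩ := hrep z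
    refine ⟨cls o t, Set.mem_range_self t, ?_⟩
    ext w
    simp only [Set.mem_setOf_eq]
    constructor
    · rintro ⟨u, hu, hw⟩
      have : hrEquiv o (e t) (e u) := (hrEquiv_map e hc o t u).mp hu
      exact hrEquiv_trans ht (hrEquiv_trans this hw)
    · intro hw
      exact ⟨t, mem_cls_self o t, hrEquiv_trans (hrEquiv_symm ht) hw⟩
  exact le_trans (Set.ncard_le_ncard hsub (hf.image _)) (Set.ncard_image_le hf)

/-- Lower bound on the number of classes from pairwise inequivalent elements. -/
lemma le_ncard_hrClasses {o : Ordinal.{u}} {m : ℕ} (f : Fin m → α)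
    (hf : ∀ i j, i ≠ j → ¬ hrEquiv o (f i) (f j)) (hfin : (hrClasses α o).Finite) :
    m ≤ (hrClasses α o).ncard := by
  have hinj : Function.Injective (fun i => cls o (f i)) := by
    intro i j hij
    by_contra hne
    exact hf i j hne (cls_eq_iff.mp hij)
  have hsub : Set.range (fun i => cls o (f i)) ⊆ hrClasses α o := by
    rintro s ⟨i, rfl⟩; exact cls_mem_hrClasses o (f i)
  have h1 : (Set.range (fun i => cls o (f i))).ncard = m := by
    rw [← Set.image_univ, Set.ncard_image_of_injective _ hinj, Set.ncard_univ, Nat.card_eq_fintype_card, Fintype.card_fin]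
  rw [← h1]
  exact Set.ncard_le_ncard hsub hfin

end Chunk2
section Chunk3
variable {α : Type u} [LinearOrder α]

/-- The inclusion of a subset as an order embedding. -/
def inclEmb (I : Set α) : ↥I ↪o α := OrderEmbedding.subtype _

lemma range_inclEmb (I : Set α) : Set.range (inclEmb I) = I := Subtype.range_coe

lemma range_inclEmb_ordConnected {I : Set α} (h : I.OrdConnected) :
    (Set.range (inclEmb I)).OrdConnected := by rw [range_inclEmb]; exact h

/-- The crucial interval characterization of the successor condensation relation. -/
lemma hrEquiv_succ_iff_interval (o : Ordinal.{u}) (x y : α) :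
    hrEquiv (Order.succ o) x y ↔ (hrClasses ↥(Set.uIcc x y) o).Finite := by
  set I := Set.uIcc x y with hI
  have hc : (Set.range (inclEmb I)).OrdConnected :=
    range_inclEmb_ordConnected Set.ordConnected_uIcc
  have hfam : {s : Set α | ∃ z ∈ I, s = {w ∈ I | hrEquiv o z w}} =
      (Set.image (Subtype.val : ↥I → α)) '' hrClasses ↥I o := by
    apply subset_antisymm
    · rintro s ⟨z, hz, rfl⟩
      refine ⟨cls o (⟨z, hz⟩ : ↥I), cls_mem_hrClasses o _, ?_⟩
      ext v
      constructor
      · rintro ⟨w, hw, rfl⟩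
        exact ⟨w.2, (hrEquiv_map (inclEmb I) hc o ⟨z, hz⟩ w).mp hw⟩
      · rintro ⟨hv1, hv2⟩
        exact ⟨⟨v, hv1⟩, (hrEquiv_map (inclEmb I) hc o ⟨z, hz⟩ ⟨v, hv1⟩).mpr hv2, rfl⟩
    · rintro s ⟨t, ht, rfl⟩
      rw [hrClasses_eq_range] at ht
      obtain ⟨z, rfl⟩ := ht
      refine ⟨↑z, z.2, ?_⟩
      ext v
      constructor
      · rintro ⟨w, hw, rfl⟩
        exact ⟨w.2, (hrEquiv_map (inclEmb I) hc o z w).mp hw⟩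
      · rintro ⟨hv1, hv2⟩
        exact ⟨⟨v, hv1⟩, (hrEquiv_map (inclEmb I) hc o z ⟨v, hv1⟩).mpr hv2, rfl⟩
  rw [hrEquiv_succ_iff, ← hI, hfam]
  constructor
  · intro h
    exact Set.Finite.of_finite_image h
      ((Set.image_injective.mpr Subtype.val_injective).injOn)
  · exact fun h => h.image _

/-- Lower bound on the density of a linear order. -/
lemma coe_le_density (β : Type u) [LinearOrder β] (hne : Nonempty β) (γ : Ordinal.{u}) (m : ℕ)
    (hrk : ∀ r : Ordinal.{u}, (hrClasses β r).Finite → γ ≤ r)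
    (hcard : (hrClasses β γ).Finite → m + 1 ≤ (hrClasses β γ).ncard) :
    ((↑(Ordinal.omega0.{u} * γ + (m : Ordinal.{u})) : WithTop Ordinal.{u}) :
      WithBot (WithTop Ordinal.{u})) ≤ density β := by
  by_cases hex : ∃ o : Ordinal.{u}, (hrClasses β o).Finite
  · rw [density, dif_pos hex, if_pos hne, WithBot.coe_le_coe, WithTop.coe_le_coe]
    set ρ := sInf {o : Ordinal.{u} | (hrClasses β o).Finite} with hρ
    have hρmem : (hrClasses β ρ).Finite := csInf_mem hex
    have hγρ : γ ≤ ρ := hrk ρ hρmem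
    rcases eq_or_lt_of_le hγρ with rfl | hlt
    · apply add_le_add_right
      have h1 := hcard hρmem
      have h2 : m ≤ (hrClasses β ρ).ncard - 1 := by omega
      exact_mod_cast Nat.cast_le.mpr h2
    · refine le_of_lt (lt_of_lt_of_le (add_lt_add_right (Ordinal.nat_lt_omega0 m) _) ?_)
      rw [← Ordinal.mul_succ]
      exact le_trans (mul_le_mul_right (Order.succ_le_of_lt hlt) _) le_self_add
  · rw [density, dif_neg hex]
    exact WithBot.coe_le_coe.mpr le_top

/-- Density is invariant under order isomorphism. -/
lemma density_congr {β γ : Type u} [LinearOrder β] [LinearOrder γ] (e : β ≃o γ) :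
    density β = density γ := by
  have hc : (Set.range (e.toOrderEmbedding : β ↪o γ)).OrdConnected := by
    have : Set.range (e.toOrderEmbedding : β ↪o γ) = Set.univ := e.surjective.range_eq
    rw [this]; exact Set.ordConnected_univ
  have hcls : ∀ o : Ordinal.{u}, hrClasses γ o = (Set.image e) '' hrClasses β o := by
    intro o
    rw [hrClasses_eq_range, hrClasses_eq_range]
    apply subset_antisymm
    · rintro s ⟨z, rfl⟩
      refine ⟨cls o (e.symm z), Set.mem_range_self _, ?_⟩
      ext v
      constructor
      · rintro ⟨w, hw, rfl⟩
        have := (hrEquiv_map e.toOrderEmbedding hc o (e.symm z) w).mp hw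
        simpa [cls] using this
      · intro hv
        refine ⟨e.symm v, (hrEquiv_map e.toOrderEmbedding hc o (e.symm z) (e.symm v)).mpr ?_,
          by simp⟩
        simpa [cls] using hv
    · rintro s ⟨t, ⟨z, rfl⟩, rfl⟩
      refine ⟨e z, ?_⟩
      ext v
      constructor
      · intro hv
        refine ⟨e.symm v, (hrEquiv_map e.toOrderEmbedding hc o z (e.symm v)).mpr ?_, by simp⟩
        simpa [cls] using hv
      · rintro ⟨w, hw, rfl⟩
        have := (hrEquiv_map e.toOrderEmbedding hc o z w).mp hw
        simpa [cls] using this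
  have hncard : ∀ o : Ordinal.{u}, (hrClasses γ o).ncard = (hrClasses β o).ncard := by
    intro o
    rw [hcls o, Set.ncard_image_of_injective _ (Set.image_injective.mpr e.injective)]
  have hset : {o : Ordinal.{u} | (hrClasses β o).Finite} =
      {o : Ordinal.{u} | (hrClasses γ o).Finite} := by
    ext o
    simp only [Set.mem_setOf_eq]
    constructor
    · intro h; rw [hcls o]; exact h.image _
    · intro h
      rw [hcls o] at h
      exact Set.Finite.of_finite_image h ((Set.image_injective.mpr e.injective).injOn)
  by_cases hex : ∃ o : Ordinal.{u}, (hrClasses β o).Finite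
  · have hex' : ∃ o : Ordinal.{u}, (hrClasses γ o).Finite := by
      obtain ⟨o, ho⟩ := hex
      exact ⟨o, by rw [hcls o]; exact ho.image _⟩
    have hsinf : sInf {o : Ordinal.{u} | (hrClasses β o).Finite} =
        sInf {o : Ordinal.{u} | (hrClasses γ o).Finite} := by rw [hset]
    rw [density, density, dif_pos hex, dif_pos hex']
    by_cases hne : Nonempty β
    · rw [if_pos hne, if_pos (e.toEquiv.nonempty_congr.mp hne), hsinf,
        hncard (sInf {o : Ordinal.{u} | (hrClasses γ o).Finite})]
    · rw [if_neg hne, if_neg (fun hg => hne (e.toEquiv.nonempty_congr.mpr hg))]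
  · have hex' : ¬ ∃ o : Ordinal.{u}, (hrClasses γ o).Finite := by
      intro ⟨o, ho⟩
      rw [hcls o] at ho
      exact hex ⟨o, Set.Finite.of_finite_image ho
        ((Set.image_injective.mpr e.injective).injOn)⟩
    rw [density, density, dif_neg hex, dif_neg hex']

end Chunk3
section Chunk4

lemma limit_le_of_forall {o : Ordinal.{u}} (ho : Order.IsSuccLimit o) {D : WithBot (WithTop Ordinal.{u})}
    (H : ∀ β < o, ((β : WithTop Ordinal.{u}) : WithBot (WithTop Ordinal.{u})) ≤ D) :
    ((o : WithTop Ordinal.{u}) : WithBot (WithTop Ordinal.{u})) ≤ D := by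
  induction D using WithBot.recBotCoe with
  | bot => exact absurd (H 0 ho.pos) (WithBot.not_coe_le_bot _)
  | coe D =>
    induction D using WithTop.recTopCoe with
    | top => exact WithBot.coe_le_coe.mpr le_top
    | coe δ =>
      rw [WithBot.coe_le_coe, WithTop.coe_le_coe]
      suffices hs : ∀ x < o, x ≤ δ by exact le_of_not_gt fun hlt => (Order.lt_succ δ).not_ge (hs _ (ho.succ_lt hlt))
      intro x hx
      have hx' := H x hx
      rwa [WithBot.coe_le_coe, WithTop.coe_le_coe] at hx'

variable {α : Type u} [LinearOrder α]

/-- A canonical representative picker for classes. -/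
noncomputable def clsRep [Nonempty α] (o : Ordinal.{u}) (s : Set α) : α :=
  if h : ∃ z, s = cls o z then h.choose else Classical.arbitrary α

lemma clsRep_spec [Nonempty α] {o : Ordinal.{u}} {s : Set α} (h : s ∈ hrClasses α o) :
    s = cls o (clsRep o s) := by
  have h' : ∃ z, s = cls o z := h
  rw [clsRep, dif_pos h']
  exact h'.choose_spec

/-- Core lemma: if `D` dominates the density of every closed interval of `α`, then it
dominates the density of `α`. -/
lemma density_le_of_intervals (α : Type u) [LinearOrder α]
    {D : WithBot (WithTop Ordinal.{u})}
    (H : ∀ x y : α, density ↥(Set.uIcc x y) ≤ D) :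
    density α ≤ D := by
  by_cases hne : Nonempty α
  swap
  · have hcl : hrClasses α (0 : Ordinal.{u}) = ∅ := by
      ext s
      simp only [Set.mem_empty_iff_false, iff_false]
      rintro ⟨z, -⟩
      exact hne ⟨z⟩
    have hex : ∃ o : Ordinal.{u}, (hrClasses α o).Finite := ⟨0, by rw [hcl]; exact Set.finite_empty⟩
    rw [density, dif_pos hex, if_neg hne]
    exact bot_le
  by_cases hex : ∃ o : Ordinal.{u}, (hrClasses α o).Finite
  swap
  · by_cases hall : ∀ x y : α, ∃ o : Ordinal.{u}, (hrClasses ↥(Set.uIcc x y) o).Finite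
    · exfalso
      apply hex
      choose f hf using hall
      obtain ⟨ρ, hρ⟩ := Ordinal.bddAbove_range (fun p : α × α => f p.1 p.2)
      refine ⟨Order.succ ρ, ?_⟩
      have hequiv : ∀ x y : α, hrEquiv (Order.succ ρ) x y := by
        intro x y
        rw [hrEquiv_succ_iff_interval]
        exact hrClasses_finite_mono (hρ ⟨(x, y), rfl⟩) (hf x y)
      have hsub : hrClasses α (Order.succ ρ) ⊆ {cls (Order.succ ρ) (Classical.arbitrary α)} := by
        rintro s ⟨z, rfl⟩
        simp only [Set.mem_singleton_iff]
        exact (cls_eq_cls (hequiv (Classical.arbitrary α) z)).symm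
      exact (Set.finite_singleton _).subset hsub
    · obtain ⟨x, hx⟩ := not_forall.mp hall
      obtain ⟨y, hxy⟩ := not_forall.mp hx
      have hd : density ↥(Set.uIcc x y) = ((⊤ : WithTop Ordinal.{u}) : WithBot (WithTop Ordinal.{u})) := by
        rw [density, dif_neg hxy]
      rw [density, dif_neg hex, ← hd]
      exact H x y
  rw [density, dif_pos hex, if_pos hne]
  set ρ := sInf {o : Ordinal.{u} | (hrClasses α o).Finite} with hρdef
  have hρmem : (hrClasses α ρ).Finite := csInf_mem hex
  have hρmin : ∀ r : Ordinal.{u}, (hrClasses α r).Finite → ρ ≤ r := fun r hr => csInf_le' hr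
  set n := (hrClasses α ρ).ncard with hn
  have hn1 : 1 ≤ n := by
    have hne' : (hrClasses α ρ).Nonempty :=
      ⟨cls ρ (Classical.arbitrary α), cls_mem_hrClasses _ _⟩
    have := (Set.ncard_pos hρmem).mpr hne'
    omega
  -- representatives of the ρ-classes
  set T := clsRep ρ '' hrClasses α ρ with hT
  have hTfin : T.Finite := hρmem.image _
  have hTne : T.Nonempty := by
    refine ⟨clsRep ρ (cls ρ (Classical.arbitrary α)), Set.mem_image_of_mem _ ?_⟩
    exact cls_mem_hrClasses _ _
  have hTrep : ∀ z : α, ∃ t ∈ T, hrEquiv ρ z t := by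
    intro z
    refine ⟨clsRep ρ (cls ρ z), Set.mem_image_of_mem _ (cls_mem_hrClasses _ _), ?_⟩
    exact cls_eq_iff.mp (clsRep_spec (cls_mem_hrClasses ρ z))
  obtain ⟨a, haT, ha⟩ := Set.exists_min_image T id hTfin hTne
  obtain ⟨b, hbT, hb⟩ := Set.exists_max_image T id hTfin hTne
  have hTsub : T ⊆ Set.uIcc a b := fun t ht => Set.mem_uIcc.mpr (Or.inl ⟨ha t ht, hb t ht⟩)
  have hIrep : ∀ z : α, ∃ t : ↥(Set.uIcc a b), hrEquiv ρ z ((inclEmb _) t) := by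
    intro z
    obtain ⟨t, htT, htR⟩ := hTrep z
    exact ⟨⟨t, hTsub htT⟩, htR⟩
  by_cases hn2 : 2 ≤ n
  · -- at least two classes: the interval [a,b] realizes the density exactly
    have hab : ¬ hrEquiv ρ a b := by
      intro hR
      have hsub : hrClasses α ρ ⊆ {cls ρ a} := by
        intro s hs
        have hspec := clsRep_spec hs
        have htT : clsRep ρ s ∈ T := Set.mem_image_of_mem _ hs
        have hat : hrEquiv ρ a (clsRep ρ s) := hrEquiv_convex hR (hTsub htT)
        simp only [Set.mem_singleton_iff]
        rw [hspec, ← cls_eq_cls hat]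
      have hle1 : n ≤ 1 := by
        rw [hn]
        exact le_trans (Set.ncard_le_ncard hsub (Set.finite_singleton _))
          (le_of_eq (Set.ncard_singleton _))
      omega
    refine le_trans ?_ (H a b)
    have hle := coe_le_density ↥(Set.uIcc a b) ⟨⟨a, Set.left_mem_uIcc⟩⟩ ρ (n - 1)
      (fun r hr => ?_) (fun hfI => ?_)
    · have heq : (n - 1 : ℕ) = ((hrClasses α ρ).ncard - 1 : ℕ) := by rw [hn]
      rw [← heq]
      exact hle
    · by_contra hlt
      push_neg at hlt
      have hsucc : Order.succ r ≤ ρ := Order.succ_le_of_lt hlt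
      exact hab (hrEquiv_mono hsucc ((hrEquiv_succ_iff_interval r a b).mpr hr))
    · have hge := hrClasses_ncard_le_of_reps (inclEmb (Set.uIcc a b))
        (range_inclEmb_ordConnected Set.ordConnected_uIcc) hIrep hfI
      omega
  · have hn1' : n = 1 := by omega
    by_cases hρ0 : ρ = 0
    · have heq0 : Ordinal.omega0.{u} * ρ + ((n - 1 : ℕ) : Ordinal.{u}) =
          Ordinal.omega0.{u} * 0 + ((0 : ℕ) : Ordinal.{u}) := by
        rw [hn1', hρ0]
      rw [heq0]
      refine le_trans (coe_le_density ↥(Set.uIcc a a) ⟨⟨a, Set.left_mem_uIcc⟩⟩ 0 0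
        (fun r _ => by exact zero_le) (fun hf => ?_)) (H a a)
      have hne' : (hrClasses ↥(Set.uIcc a a) (0 : Ordinal.{u})).Nonempty :=
        ⟨cls 0 ⟨a, Set.left_mem_uIcc⟩, cls_mem_hrClasses _ _⟩
      have := (Set.ncard_pos hf).mpr hne'
      omega
    · -- `ρ ≥ 1`, one class: the density is the limit `ω·ρ`
      have hlim : Order.IsSuccLimit (Ordinal.omega0.{u} * ρ) := by
        rcases Ordinal.zero_or_succ_or_isSuccLimit ρ with h0 | ⟨γ, hγ⟩ | hl
        · exact absurd h0 hρ0
        · rw [← hγ, Ordinal.mul_succ]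
          exact Ordinal.isSuccLimit_add _ Ordinal.isSuccLimit_omega0
        · exact Ordinal.isSuccLimit_mul Ordinal.omega0_pos hl
      have hred : Ordinal.omega0.{u} * ρ + ((n - 1 : ℕ) : Ordinal.{u}) =
          Ordinal.omega0.{u} * ρ := by
        rw [hn1']
        simp
      rw [hred]
      refine limit_le_of_forall hlim ?_
      intro β hβ
      set γ := β / Ordinal.omega0.{u} with hγdef
      have hγρ : γ < ρ := (Ordinal.div_lt Ordinal.omega0_ne_zero).mpr hβ
      have hβge : Ordinal.omega0.{u} * γ ≤ β := Ordinal.mul_div_le β Ordinal.omega0.{u}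
      have hβlt : β < Ordinal.omega0.{u} * γ + Ordinal.omega0.{u} := by
        have h1 := Ordinal.lt_mul_succ_div β Ordinal.omega0_ne_zero
        rwa [Ordinal.mul_succ] at h1
      obtain ⟨m, hm⟩ : ∃ m : ℕ, β ≤ Ordinal.omega0.{u} * γ + (m : Ordinal.{u}) := by
        have heq : Ordinal.omega0.{u} * γ + (β - Ordinal.omega0.{u} * γ) = β :=
          Ordinal.add_sub_cancel_of_le hβge
        have hδ : β - Ordinal.omega0.{u} * γ < Ordinal.omega0.{u} := by
          rw [← heq] at hβlt
          exact (add_lt_add_iff_left _).mp hβlt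
        obtain ⟨m, hm⟩ := Ordinal.lt_omega0.mp hδ
        exact ⟨m, le_of_eq (by rw [← heq, hm])⟩
      -- infinitely many γ-classes
      have hinf : (hrClasses α γ).Infinite := by
        by_contra hfin
        rw [Set.not_infinite] at hfin
        exact absurd (hρmin γ hfin) (not_le.mpr hγρ)
      obtain ⟨S, hS_sub, hSfin, hScard⟩ := hinf.exists_subset_ncard_eq (m + 2)
      set V := clsRep γ '' S with hV
      have hVspec : ∀ s ∈ S, s = cls γ (clsRep γ s) := fun s hs => clsRep_spec (hS_sub hs)
      have hVinj : Set.InjOn (clsRep γ) S := by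
        intro s hs s' hs' hss
        rw [hVspec s hs, hVspec s' hs', hss]
      have hVfin : V.Finite := hSfin.image _
      have hVcard : V.ncard = m + 2 := by
        rw [hV, Set.ncard_image_of_injOn hVinj, hScard]
      have hVne : V.Nonempty := by
        rw [← Set.ncard_pos hVfin, hVcard]
        omega
      have hVpair : ∀ t ∈ V, ∀ t' ∈ V, t ≠ t' → ¬ hrEquiv γ t t' := by
        rintro t ⟨s, hs, rfl⟩ t' ⟨s', hs', rfl⟩ hne' hR
        apply hne'
        rw [← cls_eq_iff] at hR
        rw [← hVspec s hs, ← hVspec s' hs'] at hR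
        rw [hR]
      obtain ⟨a', ha'V, ha'⟩ := Set.exists_min_image V id hVfin hVne
      obtain ⟨b', hb'V, hb'⟩ := Set.exists_max_image V id hVfin hVne
      have hVsub : V ⊆ Set.uIcc a' b' :=
        fun t ht => Set.mem_uIcc.mpr (Or.inl ⟨ha' t ht, hb' t ht⟩)
      -- two distinct elements of V
      obtain ⟨t₁, ht₁, t₂, ht₂, ht12⟩ : ∃ t₁ ∈ V, ∃ t₂ ∈ V, t₁ ≠ t₂ := by
        have h2 : 1 < V.ncard := by omega
        obtain ⟨t₁, t₂, ht₁, ht₂, h⟩ := (Set.one_lt_ncard_iff hVfin).mp h2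
        exact ⟨t₁, ht₁, t₂, ht₂, h⟩
      refine le_trans ?_ (le_trans (coe_le_density ↥(Set.uIcc a' b')
        ⟨⟨a', Set.left_mem_uIcc⟩⟩ γ m (fun r hr => ?_) (fun hfI => ?_)) (H a' b'))
      · exact WithBot.coe_le_coe.mpr (WithTop.coe_le_coe.mpr hm)
      · by_contra hlt
        push_neg at hlt
        have hsucc : Order.succ r ≤ γ := Order.succ_le_of_lt hlt
        have hR : hrEquiv γ a' b' :=
          hrEquiv_mono hsucc ((hrEquiv_succ_iff_interval r a' b').mpr hr)
        have h1 : hrEquiv γ a' t₁ := hrEquiv_convex hR (hVsub ht₁)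
        have h2 : hrEquiv γ a' t₂ := hrEquiv_convex hR (hVsub ht₂)
        exact hVpair t₁ ht₁ t₂ ht₂ ht12 (hrEquiv_trans (hrEquiv_symm h1) h2)
      · -- m + 2 pairwise inequivalent elements in the interval
        have hVcard' : hVfin.toFinset.card = m + 2 := by
          rw [Set.ncard_eq_toFinset_card V hVfin] at hVcard
          exact hVcard
        set eV := hVfin.toFinset.equivFinOfCardEq hVcard' with heV
        have hmemV : ∀ i : Fin (m + 2), (eV.symm i : α) ∈ V := by
          intro i
          have := (eV.symm i).2
          rwa [Set.Finite.mem_toFinset] at this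
        set fI : Fin (m + 2) → ↥(Set.uIcc a' b') :=
          fun i => ⟨(eV.symm i : α), hVsub (hmemV i)⟩ with hfI'
        have hpair : ∀ i j, i ≠ j → ¬ hrEquiv γ (fI i) (fI j) := by
          intro i j hij hR
          have hRα : hrEquiv γ ((eV.symm i : α)) ((eV.symm j : α)) :=
            (hrEquiv_map (inclEmb _) (range_inclEmb_ordConnected Set.ordConnected_uIcc)
              γ (fI i) (fI j)).mp hR
          have hne' : ((eV.symm i : α)) ≠ ((eV.symm j : α)) := by
            intro h
            exact hij (by
              have : eV.symm i = eV.symm j := Subtype.ext h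
              exact eV.symm.injective this)
          exact hVpair _ (hmemV i) _ (hmemV j) hne' hRα
        have := le_ncard_hrClasses fI hpair hfI
        omega

end Chunk4

/-- for a poset `P`, the density (the supremum of densities of chains
having a maximum and a minimum) equals the supremum of the densities of all chains. -/
theorem statement11 (P : Type u) [PartialOrder P] :
    posetDensitySet (Set.univ : Set P) =
      sSup {d | ∃ (A : Set P) (h : IsChain (· ≤ ·) A), d = chainDensity A h} := by
  apply le_antisymm
  · apply sSup_le_sSup
    rintro d ⟨A, h, -, -, -, hd⟩
    exact ⟨A, h, hd⟩
  · apply sSup_le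
    rintro d ⟨A, h, rfl⟩
    letI : LinearOrder ↥A := chainLinearOrder h
    show density ↥A ≤ _
    apply density_le_of_intervals
    intro a b
    set B : Set P := Subtype.val '' Set.uIcc a b with hBdef
    have hBA : B ⊆ A := by rintro p ⟨x, hx, rfl⟩; exact x.2
    have hBchain : IsChain (· ≤ ·) B := by
      intro p hp q hq hpq
      rcases hp with ⟨x, hx, rfl⟩
      rcases hq with ⟨y, hy, rfl⟩
      rcases le_total x y with hxy | hxy
      · exact Or.inl hxy
      · exact Or.inr hxy
    have hsupmem : a ⊔ b ∈ Set.uIcc a b := by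
      rcases le_total a b with hab | hab
      · rw [sup_eq_right.mpr hab]; exact Set.right_mem_uIcc
      · rw [sup_eq_left.mpr hab]; exact Set.left_mem_uIcc
    have hinfmem : a ⊓ b ∈ Set.uIcc a b := by
      rcases le_total a b with hab | hab
      · rw [inf_eq_left.mpr hab]; exact Set.left_mem_uIcc
      · rw [inf_eq_right.mpr hab]; exact Set.right_mem_uIcc
    have hmax : ∃ m ∈ B, ∀ p ∈ B, p ≤ m := by
      refine ⟨↑(a ⊔ b), ⟨a ⊔ b, hsupmem, rfl⟩, ?_⟩
      rintro p ⟨x, hx, rfl⟩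
      have hx' : x ≤ a ⊔ b := by
        rcases Set.mem_uIcc.mp hx with ⟨h1, h2⟩ | ⟨h1, h2⟩
        · exact le_trans h2 le_sup_right
        · exact le_trans h2 le_sup_left
      exact hx'
    have hmin : ∃ m ∈ B, ∀ p ∈ B, m ≤ p := by
      refine ⟨↑(a ⊓ b), ⟨a ⊓ b, hinfmem, rfl⟩, ?_⟩
      rintro p ⟨x, hx, rfl⟩
      have hx' : a ⊓ b ≤ x := by
        rcases Set.mem_uIcc.mp hx with ⟨h1, h2⟩ | ⟨h1, h2⟩
        · exact le_trans inf_le_left h1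
        · exact le_trans inf_le_right h1
      exact hx'
    letI : LinearOrder ↥B := chainLinearOrder hBchain
    have e : ↥B ≃o ↥(Set.uIcc a b) :=
      { toFun := fun p => ⟨⟨p.1, hBA p.2⟩, by
          obtain ⟨x, hx, hxe⟩ := p.2
          have hxx : (⟨p.1, hBA p.2⟩ : ↥A) = x := Subtype.ext hxe.symm
          rw [hxx]; exact hx⟩,
        invFun := fun x => ⟨(x : ↥A).1, ⟨(x : ↥A), x.2, rfl⟩⟩,
        left_inv := fun p => Subtype.ext rfl,
        right_inv := fun x => Subtype.ext (Subtype.ext rfl),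
        map_rel_iff' := fun {p q} => Iff.rfl }
    rw [← density_congr e]
    exact le_sSup ⟨B, hBchain, Set.subset_univ B, hmax, hmin, rfl⟩


end PaperHam

end
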